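/- arXiv:1504.04678 — 5 statements merged into one kernel-verified Lean document; each statement's English description precedes it below -/
import Mathlib

section
/- Let (N,ν) be a measure space, 1 < p < ∞, α > 0, and u ∈ L^p(N). Then ∫_{{|u|≥1}} e^{α|u|^{p'}} dν − e^α ‖u‖_p^p ≤ ∫_N (e^{α|u|^{p'}} − Σ_{k=0}^{⌈p-2⌉} α^k |u|^{k p'}/k!) dν ≤ ∫_{{|u|≥1}} e^{α|u|^{p'}} dν + e^α ‖u‖_p^p, where p' = p/(p-1) and ⌈p-2⌉ is the smallest integer ≥ p-2. -/
/-!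
Write `q = p / (p - 1)` and `M = ⌈p - 2⌉₊`, so that `M q ≤ p ≤ (M + 1) q`. Where `|u| ≥ 1`, every
kept Taylor term `αᵏ |u|^{kq} / k!` is at most `(αᵏ / k!) |u|ᵖ`, so the subtracted polynomial is at
most `e^α |u|ᵖ`. Where `|u| < 1`, the Taylor tail starts at the power `|u|^{(M+1)q} ≤ |u|ᵖ`, so the
regularized exponential is again at most `e^α |u|ᵖ`. Integrating these two pointwise bounds gives
both inequalities.
-/

open MeasureTheory Real ENNReal Finset Nat

lemma exp_mul_sub_sum_range_le_pow_mul_exp {a r : ℝ} (ha : 0 ≤ a) (hr₀ : 0 ≤ r) (hr₁ : r ≤ 1)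
    (n : ℕ) : exp (a * r) - ∑ k ∈ range n, (a * r) ^ k / k ! ≤ r ^ n * exp a := by
  have tail (x : ℝ) :
      HasSum (fun k => x ^ (k + n) / (k + n)!) (exp x - ∑ k ∈ range n, x ^ k / k !) := by
    refine (hasSum_nat_add_iff' (f := fun k => x ^ k / k !) n).mpr ?_
    rw [Real.exp_eq_exp_ℝ]
    exact NormedSpace.expSeries_div_hasSum_exp x
  calc exp (a * r) - ∑ k ∈ range n, (a * r) ^ k / k !
      ≤ r ^ n * (exp a - ∑ k ∈ range n, a ^ k / k !) := by
        refine hasSum_le (fun k => ?_) (tail (a * r)) ((tail a).mul_left (r ^ n))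
        have : r ^ (k + n) ≤ r ^ n := pow_le_pow_of_le_one hr₀ hr₁ (Nat.le_add_left n k)
        rw [mul_pow, mul_div_assoc', mul_comm (r ^ n)]
        gcongr
    _ ≤ r ^ n * exp a := by
        gcongr
        exact sub_le_self _ (sum_nonneg fun k _ => by positivity)

lemma sum_range_pow_mul_rpow_eq {t : ℝ} (ht : 0 ≤ t) (a q : ℝ) (n : ℕ) :
    ∑ k ∈ range n, a ^ k * t ^ ((k : ℝ) * q) / k ! = ∑ k ∈ range n, (a * t ^ q) ^ k / k ! := by
  refine sum_congr rfl fun k _ => ?_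
  rw [mul_pow, mul_comm (k : ℝ) q, rpow_mul ht, Real.rpow_natCast]

lemma sum_range_pow_mul_rpow_le_exp {t a : ℝ} (ht : 0 ≤ t) (ha : 0 ≤ a) (q : ℝ) (n : ℕ) :
    ∑ k ∈ range n, a ^ k * t ^ ((k : ℝ) * q) / k ! ≤ exp (a * t ^ q) := by
  rw [sum_range_pow_mul_rpow_eq ht]
  exact sum_le_exp_of_nonneg (by positivity) n

lemma sum_range_pow_mul_rpow_le_exp_mul_rpow {t a q p : ℝ} (ht : 1 ≤ t) (ha : 0 ≤ a) (hq : 0 ≤ q)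
    {n : ℕ} (hnq : n * q ≤ p) :
    ∑ k ∈ range (n + 1), a ^ k * t ^ ((k : ℝ) * q) / k ! ≤ exp a * t ^ p := by
  calc ∑ k ∈ range (n + 1), a ^ k * t ^ ((k : ℝ) * q) / k !
      ≤ ∑ k ∈ range (n + 1), a ^ k / k ! * t ^ p := by
        refine sum_le_sum fun k hk => ?_
        have hkn : (k : ℝ) ≤ n := by exact_mod_cast Nat.lt_succ_iff.mp (mem_range.mp hk)
        have : t ^ ((k : ℝ) * q) ≤ t ^ p :=
          rpow_le_rpow_of_exponent_le ht ((mul_le_mul_of_nonneg_right hkn hq).trans hnq)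
        rw [div_mul_eq_mul_div]
        gcongr
    _ ≤ exp a * t ^ p := by
        rw [← sum_mul]
        gcongr
        exact sum_le_exp_of_nonneg ha _

lemma exp_mul_rpow_sub_sum_range_le_exp_mul_rpow {t a q p : ℝ} (ht₀ : 0 ≤ t) (ht₁ : t ≤ 1)
    (ha : 0 ≤ a) (hq : 0 ≤ q) (hp : 0 ≤ p) {n : ℕ} (hnq : p ≤ (n + 1) * q) :
    exp (a * t ^ q) - ∑ k ∈ range (n + 1), a ^ k * t ^ ((k : ℝ) * q) / k ! ≤ exp a * t ^ p := by
  rw [sum_range_pow_mul_rpow_eq ht₀, mul_comm (exp a)]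
  refine (exp_mul_sub_sum_range_le_pow_mul_exp ha (by positivity)
    (rpow_le_one ht₀ ht₁ hq) (n + 1)).trans ?_
  gcongr
  rw [← Real.rpow_natCast, ← rpow_mul ht₀]
  exact rpow_le_rpow_of_exponent_ge' ht₀ ht₁ hp (by push_cast; linarith)

lemma natCeil_sub_two_mul_div_sub_one_le {p : ℝ} (hp : 1 < p) :
    (⌈p - 2⌉₊ : ℝ) * (p / (p - 1)) ≤ p := by
  have hM : (⌈p - 2⌉₊ : ℝ) ≤ p - 1 := by
    rcases le_or_gt (p - 2) 0 with h | h
    · rw [Nat.ceil_eq_zero.mpr h]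
      exact_mod_cast (sub_pos.2 hp).le
    · linarith [Nat.ceil_lt_add_one h.le]
  calc (⌈p - 2⌉₊ : ℝ) * (p / (p - 1)) ≤ (p - 1) * (p / (p - 1)) := by gcongr
    _ = p := mul_div_cancel₀ p (sub_pos.2 hp).ne'

lemma le_natCeil_sub_two_add_one_mul_div_sub_one {p : ℝ} (hp : 1 < p) :
    p ≤ (⌈p - 2⌉₊ + 1 : ℝ) * (p / (p - 1)) := by
  calc p = (p - 1) * (p / (p - 1)) := (mul_div_cancel₀ p (sub_pos.2 hp).ne').symm
    _ ≤ (⌈p - 2⌉₊ + 1 : ℝ) * (p / (p - 1)) := by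
        gcongr
        linarith [Nat.le_ceil (p - 2)]

section Lintegral

variable {X : Type*} [MeasurableSpace X] {μ : Measure X} {f g h : X → ℝ≥0∞} {s : Set X}
  {c : ℝ≥0∞}

lemma setLIntegral_le_lintegral_add_const_mul (hh : AEMeasurable h μ)
    (hs : NullMeasurableSet s μ) (hfg : ∀ x ∈ s, f x ≤ g x + c * h x) :
    ∫⁻ x in s, f x ∂μ ≤ ∫⁻ x, g x ∂μ + c * ∫⁻ x, h x ∂μ := by
  calc ∫⁻ x in s, f x ∂μ ≤ ∫⁻ x in s, g x + c * h x ∂μ :=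
        lintegral_mono_ae ((ae_restrict_mem₀ hs).mono hfg)
    _ = ∫⁻ x in s, g x ∂μ + c * ∫⁻ x in s, h x ∂μ := by
        rw [lintegral_add_right' _ (hh.restrict.const_mul c), lintegral_const_mul'' _ hh.restrict]
    _ ≤ ∫⁻ x, g x ∂μ + c * ∫⁻ x, h x ∂μ :=
        add_le_add (setLIntegral_le_lintegral _ _)
          (mul_le_mul_right (setLIntegral_le_lintegral _ _) c)

lemma lintegral_le_setLIntegral_add_const_mul (hh : AEMeasurable h μ)
    (hin : ∀ x ∈ s, g x ≤ f x) (hout : ∀ x ∉ s, g x ≤ c * h x) :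
    ∫⁻ x, g x ∂μ ≤ ∫⁻ x in s, f x ∂μ + c * ∫⁻ x, h x ∂μ := by
  calc ∫⁻ x, g x ∂μ ≤ ∫⁻ x, s.indicator f x + c * h x ∂μ := by
        refine lintegral_mono fun x => ?_
        by_cases hx : x ∈ s
        · simpa [hx] using le_add_right (hin x hx)
        · simpa [hx] using hout x hx
    _ = ∫⁻ x, s.indicator f x ∂μ + c * ∫⁻ x, h x ∂μ := by
        rw [lintegral_add_right' _ (hh.const_mul c), lintegral_const_mul'' _ hh]
    _ ≤ ∫⁻ x in s, f x ∂μ + c * ∫⁻ x, h x ∂μ :=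
        add_le_add_left (lintegral_indicator_le f s) _

end Lintegral

/-- Exponential Regularization Lemma (Lemma 9 of Fontana–Morpurgo). -/
theorem stmt2 {N : Type*} [MeasurableSpace N] (ν : Measure N) (p α : ℝ)
    (hp : 1 < p) (hα : 0 < α) (u : N → ℝ)
    (hu : MemLp u (ENNReal.ofReal p) ν) :
    (∫⁻ x in {x | 1 ≤ |u x|}, ENNReal.ofReal (exp (α * |u x| ^ (p / (p - 1)))) ∂ν)
        - ENNReal.ofReal (exp α) * ∫⁻ x, ENNReal.ofReal (|u x| ^ p) ∂ν
      ≤ ∫⁻ x, ENNReal.ofReal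
          (exp (α * |u x| ^ (p / (p - 1))) -
            ∑ k ∈ Finset.range (⌈p - 2⌉₊ + 1),
              α ^ k * |u x| ^ ((k : ℝ) * (p / (p - 1))) / (Nat.factorial k)) ∂ν ∧
    (∫⁻ x, ENNReal.ofReal
          (exp (α * |u x| ^ (p / (p - 1))) -
            ∑ k ∈ Finset.range (⌈p - 2⌉₊ + 1),
              α ^ k * |u x| ^ ((k : ℝ) * (p / (p - 1))) / (Nat.factorial k)) ∂ν)
      ≤ (∫⁻ x in {x | 1 ≤ |u x|}, ENNReal.ofReal (exp (α * |u x| ^ (p / (p - 1)))) ∂ν)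
        + ENNReal.ofReal (exp α) * ∫⁻ x, ENNReal.ofReal (|u x| ^ p) ∂ν := by
  have hq : 0 ≤ p / (p - 1) := (div_pos (by linarith) (sub_pos.2 hp)).le
  have hu' : AEMeasurable u ν := hu.aestronglyMeasurable.aemeasurable
  have hpow : AEMeasurable (fun x => ENNReal.ofReal (|u x| ^ p)) ν := by fun_prop
  constructor
  · rw [tsub_le_iff_right]
    refine setLIntegral_le_lintegral_add_const_mul hpow
      (nullMeasurableSet_le aemeasurable_const hu'.abs) fun x hx => ?_
    rw [← ofReal_mul (exp_pos α).le, ← ofReal_add (sub_nonneg.2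
      (sum_range_pow_mul_rpow_le_exp (abs_nonneg _) hα.le _ _)) (by positivity)]
    refine ofReal_le_ofReal ?_
    linarith [sum_range_pow_mul_rpow_le_exp_mul_rpow hx hα.le hq
      (natCeil_sub_two_mul_div_sub_one_le hp)]
  · refine lintegral_le_setLIntegral_add_const_mul hpow (fun x _ => ofReal_le_ofReal
      (sub_le_self _ (sum_nonneg fun k _ => by positivity))) fun x hx => ?_
    rw [← ofReal_mul (exp_pos α).le]
    exact ofReal_le_ofReal (exp_mul_rpow_sub_sum_range_le_exp_mul_rpow (abs_nonneg _)
      (not_le.mp hx).le hα.le hq (by linarith) (le_natCeil_sub_two_add_one_mul_div_sub_one hp))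
end

section
/- Let g : ℝⁿ \ {0} → ℝ be homogeneous of degree α−n (i.e. g(x) = g(x/|x|)·|x|^{α−n}) with 0 < α < n, and suppose g restricted to the unit sphere is Lipschitz with respect to Euclidean distance. Then there exists L > 0 depending only on g, α, n such that for all x₁, x₂, y with y ≠ x₁, y ≠ x₂: |g(x₁−y) − g(x₂−y)| ≤ L·|x₁−x₂|·(min(|x₁−y|, |x₂−y|))^{α−n−1}. -/
/-!
Write `x = ‖x‖ • u` with `u` on the unit sphere. For `‖a‖ ≤ ‖b‖`,
`g a - g b = (g u - g v) ‖a‖ ^ c + g v (‖a‖ ^ c - ‖b‖ ^ c)`: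
the first term is controlled by the Lipschitz bound on the sphere together with
`‖u - v‖ ≤ 2 ‖a - b‖ / ‖b‖`, the second by the boundedness of `g` on the sphere and the
mean value theorem for `t ↦ t ^ c`, whose derivative is largest in absolute value at the
smaller radius `‖a‖`.
-/

open Real Metric Bornology NNReal

theorem LipschitzOnWith.isBounded_image {α β : Type*} [PseudoMetricSpace α]
    [PseudoMetricSpace β] {f : α → β} {K : ℝ≥0} {s : Set α} (hf : LipschitzOnWith K f s)
    (hs : IsBounded s) : IsBounded (f '' s) := by
  obtain ⟨C, hC⟩ := isBounded_iff.1 hs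
  refine isBounded_iff.2 ⟨K * C, ?_⟩
  rintro _ ⟨x, hx, rfl⟩ _ ⟨y, hy, rfl⟩
  exact (hf.dist_le_mul x hx y hy).trans (by gcongr; exact hC hx hy)

theorem abs_rpow_sub_rpow_le_of_nonpos {c r s : ℝ} (hc : c ≤ 0) (hr : 0 < r) (hrs : r ≤ s) :
    |r ^ c - s ^ c| ≤ -c * r ^ (c - 1) * (s - r) := by
  have hderiv : ∀ t ∈ Set.Ici r, HasDerivWithinAt (fun t : ℝ ↦ t ^ c) (c * t ^ (c - 1))
      (Set.Ici r) t := fun t ht ↦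
    (hasDerivAt_rpow_const (Or.inl (hr.trans_le ht).ne')).hasDerivWithinAt
  have hbound : ∀ t ∈ Set.Ici r, ‖c * t ^ (c - 1)‖ ≤ -c * r ^ (c - 1) := fun t ht ↦ by
    have ht₀ : 0 < t := hr.trans_le ht
    rw [norm_mul, norm_of_nonpos hc, norm_of_nonneg (rpow_pos_of_pos ht₀ _).le]
    exact mul_le_mul_of_nonneg_left (rpow_le_rpow_of_nonpos hr ht (by linarith)) (by linarith)
  simpa [abs_sub_comm, abs_of_nonneg (sub_nonneg.2 hrs)] using
    (convex_Ici r).norm_image_sub_le_of_norm_hasDerivWithin_le hderiv hbound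
      Set.self_mem_Ici hrs

theorem norm_inv_norm_smul_sub_inv_norm_smul_le {E : Type*} [NormedAddCommGroup E]
    [NormedSpace ℝ E] {a b : E} (ha : a ≠ 0) (hab : ‖a‖ ≤ ‖b‖) :
    ‖‖a‖⁻¹ • a - ‖b‖⁻¹ • b‖ ≤ 2 * ‖a - b‖ / ‖b‖ := by
  have hra : 0 < ‖a‖ := norm_pos_iff.2 ha
  have hrb : 0 < ‖b‖ := hra.trans_le hab
  have hsplit : ‖a‖⁻¹ • a - ‖b‖⁻¹ • b = ‖b‖⁻¹ • (a - b) + (‖a‖⁻¹ - ‖b‖⁻¹) • a := by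
    rw [smul_sub, sub_smul]
    abel
  have hinv : 0 ≤ ‖a‖⁻¹ - ‖b‖⁻¹ := sub_nonneg.2 (inv_anti₀ hra hab)
  rw [hsplit, le_div_iff₀ hrb]
  calc ‖‖b‖⁻¹ • (a - b) + (‖a‖⁻¹ - ‖b‖⁻¹) • a‖ * ‖b‖
      ≤ (‖b‖⁻¹ * ‖a - b‖ + (‖a‖⁻¹ - ‖b‖⁻¹) * ‖a‖) * ‖b‖ := by
        gcongr
        refine (norm_add_le _ _).trans_eq ?_
        rw [norm_smul, norm_smul, norm_inv, norm_norm, norm_of_nonneg hinv]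
    _ = ‖a - b‖ + (‖b‖ - ‖a‖) := by field_simp
    _ ≤ 2 * ‖a - b‖ := by linarith [norm_sub_norm_le b a, norm_sub_rev a b]

section Homogeneous

variable {E : Type*} [NormedAddCommGroup E] [NormedSpace ℝ E] {g : E → ℝ} {c C : ℝ}
  {K : ℝ≥0}

theorem abs_sub_le_of_homogeneous_of_norm_le (hc : c ≤ 0)
    (hhom : ∀ x, x ≠ 0 → g x = g (‖x‖⁻¹ • x) * ‖x‖ ^ c)
    (hlip : LipschitzOnWith K g (sphere 0 1)) (hC : ∀ u ∈ sphere (0 : E) 1, |g u| ≤ C)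
    {a b : E} (ha : a ≠ 0) (hab : ‖a‖ ≤ ‖b‖) :
    |g a - g b| ≤ (2 * K + C * -c) * ‖a - b‖ * ‖a‖ ^ (c - 1) := by
  have hra : 0 < ‖a‖ := norm_pos_iff.2 ha
  have hrb : 0 < ‖b‖ := hra.trans_le hab
  have hb : b ≠ 0 := norm_pos_iff.1 hrb
  set u := ‖a‖⁻¹ • a
  set v := ‖b‖⁻¹ • b
  have hu : u ∈ sphere (0 : E) 1 := mem_sphere_zero_iff_norm.2 (norm_smul_inv_norm ha)
  have hv : v ∈ sphere (0 : E) 1 := mem_sphere_zero_iff_norm.2 (norm_smul_inv_norm hb)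
  have hga : g a = g u * ‖a‖ ^ c := hhom a ha
  have hgb : g b = g v * ‖b‖ ^ c := hhom b hb
  have hdir : |g u - g v| ≤ K * (2 * ‖a - b‖ / ‖b‖) := by
    rw [← Real.dist_eq]
    refine (hlip.dist_le_mul u hu v hv).trans ?_
    rw [dist_eq_norm]
    gcongr
    exact norm_inv_norm_smul_sub_inv_norm_smul_le ha hab
  have hrad : |‖a‖ ^ c - ‖b‖ ^ c| ≤ -c * ‖a‖ ^ (c - 1) * ‖a - b‖ := by
    refine (abs_rpow_sub_rpow_le_of_nonpos hc hra hab).trans ?_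
    gcongr
    · exact mul_nonneg (neg_nonneg.2 hc) (rpow_nonneg hra.le _)
    · linarith [norm_sub_norm_le b a, norm_sub_rev a b]
  have hpow : ‖a‖ ^ c / ‖b‖ ≤ ‖a‖ ^ (c - 1) := by
    rw [rpow_sub_one hra.ne']
    gcongr
  have hC₀ : 0 ≤ C := (abs_nonneg _).trans (hC u hu)
  calc |g a - g b| = |(g u - g v) * ‖a‖ ^ c + g v * (‖a‖ ^ c - ‖b‖ ^ c)| := by
        rw [hga, hgb]; ring_nf
    _ ≤ |g u - g v| * ‖a‖ ^ c + |g v| * |‖a‖ ^ c - ‖b‖ ^ c| := by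
        refine (abs_add_le _ _).trans_eq ?_
        rw [abs_mul, abs_mul, abs_of_pos (rpow_pos_of_pos hra c)]
    _ ≤ K * (2 * ‖a - b‖ / ‖b‖) * ‖a‖ ^ c + C * (-c * ‖a‖ ^ (c - 1) * ‖a - b‖) := by
        gcongr
        exact hC v hv
    _ = 2 * K * ‖a - b‖ * (‖a‖ ^ c / ‖b‖) + C * -c * ‖a - b‖ * ‖a‖ ^ (c - 1) := by ring
    _ ≤ 2 * K * ‖a - b‖ * ‖a‖ ^ (c - 1) + C * -c * ‖a - b‖ * ‖a‖ ^ (c - 1) := by gcongr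
    _ = (2 * K + C * -c) * ‖a - b‖ * ‖a‖ ^ (c - 1) := by ring

theorem abs_sub_le_of_homogeneous (hc : c ≤ 0)
    (hhom : ∀ x, x ≠ 0 → g x = g (‖x‖⁻¹ • x) * ‖x‖ ^ c)
    (hlip : LipschitzOnWith K g (sphere 0 1)) (hC : ∀ u ∈ sphere (0 : E) 1, |g u| ≤ C)
    {a b : E} (ha : a ≠ 0) (hb : b ≠ 0) :
    |g a - g b| ≤ (2 * K + C * -c) * ‖a - b‖ * min ‖a‖ ‖b‖ ^ (c - 1) := by
  rcases le_total ‖a‖ ‖b‖ with hab | hba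
  · rw [min_eq_left hab]
    exact abs_sub_le_of_homogeneous_of_norm_le hc hhom hlip hC ha hab
  · rw [min_eq_right hba, abs_sub_comm, norm_sub_rev]
    exact abs_sub_le_of_homogeneous_of_norm_le hc hhom hlip hC hb hba

end Homogeneous

theorem stmt4_general (n : ℕ) (α : ℝ) (hαn : α < n)
    (g : EuclideanSpace ℝ (Fin n) → ℝ)
    (hg_hom : ∀ x : EuclideanSpace ℝ (Fin n), x ≠ 0 →
      g x = g (‖x‖⁻¹ • x) * ‖x‖ ^ (α - n))
    (hg_lip : ∃ M : ℝ, ∀ u v : EuclideanSpace ℝ (Fin n),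
      ‖u‖ = 1 → ‖v‖ = 1 → |g u - g v| ≤ M * ‖u - v‖) :
    ∃ L > 0, ∀ x₁ x₂ y : EuclideanSpace ℝ (Fin n), y ≠ x₁ → y ≠ x₂ →
      |g (x₁ - y) - g (x₂ - y)|
        ≤ L * ‖x₁ - x₂‖ * (min ‖x₁ - y‖ ‖x₂ - y‖) ^ (α - n - 1) := by
  obtain ⟨M, hM⟩ := hg_lip
  have hlip : LipschitzOnWith M.toNNReal g (sphere 0 1) :=
    LipschitzOnWith.of_dist_le' fun u hu v hv ↦ by
      simpa [Real.dist_eq, dist_eq_norm] using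
        hM u v (mem_sphere_zero_iff_norm.1 hu) (mem_sphere_zero_iff_norm.1 hv)
  obtain ⟨C, hC⟩ := (hlip.isBounded_image isBounded_sphere).exists_norm_le
  -- `C` may be negative: the sphere is empty when `n = 0`.
  have hg_bdd : ∀ u ∈ sphere 0 1, |g u| ≤ max C 0 := fun u hu ↦
    (hC _ (Set.mem_image_of_mem g hu)).trans (le_max_left _ _)
  have hCnα : 0 ≤ max C 0 * (n - α) := mul_nonneg (le_max_right _ _) (by linarith)
  refine ⟨2 * M.toNNReal + max C 0 * (n - α) + 1, by linarith [M.toNNReal.2], ?_⟩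
  intro x₁ x₂ y h₁ h₂
  have key := abs_sub_le_of_homogeneous (by linarith) hg_hom hlip hg_bdd
    (sub_ne_zero.2 h₁.symm) (sub_ne_zero.2 h₂.symm)
  rw [sub_sub_sub_cancel_right] at key
  refine key.trans ?_
  gcongr ?_ * _ * _
  linarith

/-- Estimate (22ab) from Lemma 11 of Fontana–Morpurgo: Lipschitz-type estimate for a
kernel homogeneous of degree `α - n` which is Lipschitz on the unit sphere. -/
theorem stmt4 (n : ℕ) (α : ℝ) (hα : 0 < α) (hαn : α < n)
    (g : EuclideanSpace ℝ (Fin n) → ℝ)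
    (hg_hom : ∀ x : EuclideanSpace ℝ (Fin n), x ≠ 0 →
      g x = g (‖x‖⁻¹ • x) * ‖x‖ ^ (α - n))
    (hg_lip : ∃ M : ℝ, ∀ u v : EuclideanSpace ℝ (Fin n),
      ‖u‖ = 1 → ‖v‖ = 1 → |g u - g v| ≤ M * ‖u - v‖) :
    ∃ L > 0, ∀ x₁ x₂ y : EuclideanSpace ℝ (Fin n), y ≠ x₁ → y ≠ x₂ →
      |g (x₁ - y) - g (x₂ - y)|
        ≤ L * ‖x₁ - x₂‖ * (min ‖x₁ - y‖ ‖x₂ - y‖) ^ (α - n - 1) :=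
  stmt4_general n α hαn g hg_hom hg_lip
end

section
/- Let 0 < α < n, let g : ℝⁿ\{0} → ℝ be homogeneous of degree α−n with g Lipschitz on the unit sphere, let f ∈ L^{n/α}(ℝⁿ) with supp f compact, |supp f| ≤ 1, and let F ⊆ ℝⁿ be closed with dist(F, supp f) ≥ R ≥ 1. Then T_g f(x) = ∫ g(x−y)f(y)dy is Lipschitz on F: there is D = D(n,α,g) with |T_g f(x₁) − T_g f(x₂)| ≤ (D/R)·‖f‖_{n/α}·|x₁−x₂| for all x₁, x₂ ∈ F. -/
open Real MeasureTheory ENNReal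

/-- The convolution potential `T_g f (x) = ∫ g(x-y) f(y) dy`. -/
noncomputable def Tg {n : ℕ} (g f : EuclideanSpace ℝ (Fin n) → ℝ)
    (x : EuclideanSpace ℝ (Fin n)) : ℝ :=
  ∫ y, g (x - y) * f y

/-!
For `y ∈ supp f` both `x₁ - y` and `x₂ - y` have norm at least `R`. Writing
`g z = g (z / ‖z‖) ‖z‖ ^ p` with `p = α - n ≤ 0`, the Lipschitz bound on the sphere controls the
angular part and the tangent-line inequality for the convex function `t ↦ t ^ p` the radial part,
so `|g (x₁ - y) - g (x₂ - y)| ≤ C R ^ (p - 1) ‖x₁ - x₂‖ ≤ (C / R) ‖x₁ - x₂‖`. Integrating against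
`|f|` leaves `∫ |f|`, which Hölder's inequality on `supp f`, a set of measure at most `1`, bounds
by `‖f‖_{n/α}`.
-/

open Metric

theorem one_add_mul_self_le_rpow_one_add_of_nonpos {s : ℝ} (hs : -1 < s) {p : ℝ} (hp : p ≤ 0) :
    1 + p * s ≤ (1 + s) ^ p := by
  have hs1 : 0 < 1 + s := by linarith
  calc 1 + p * s ≤ 1 + p * Real.log (1 + s) := by
        have := Real.log_le_sub_one_of_pos hs1
        nlinarith
    _ ≤ (1 + s) ^ p := by
        rw [Real.rpow_def_of_pos hs1, mul_comm (Real.log _)]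
        linarith [Real.add_one_le_exp (p * Real.log (1 + s))]

theorem abs_rpow_sub_rpow_le_of_nonpos_s5 {p R s t : ℝ} (hp : p ≤ 0) (hR : 0 < R) (hs : R ≤ s)
    (ht : R ≤ t) : |s ^ p - t ^ p| ≤ -p * R ^ (p - 1) * |s - t| := by
  wlog hst : s ≤ t generalizing s t
  · rw [abs_sub_comm, abs_sub_comm s]
    exact this ht hs (le_of_not_ge hst)
  have hs0 : 0 < s := hR.trans_le hs
  have htangent : s ^ p + p * s ^ (p - 1) * (t - s) ≤ t ^ p := by
    have h := one_add_mul_self_le_rpow_one_add_of_nonpos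
      (s := (t - s) / s) (by rw [lt_div_iff₀ hs0]; linarith) hp
    rw [one_add_div hs0.ne', add_sub_cancel, div_rpow (hs0.le.trans hst) hs0.le,
      le_div_iff₀ (rpow_pos_of_pos hs0 p)] at h
    calc s ^ p + p * s ^ (p - 1) * (t - s) = (1 + p * ((t - s) / s)) * s ^ p := by
          rw [rpow_sub_one hs0.ne']; field_simp
      _ ≤ t ^ p := h
  have hmono : s ^ (p - 1) ≤ R ^ (p - 1) := rpow_le_rpow_of_nonpos hR hs (by linarith)
  rw [abs_of_nonneg (sub_nonneg.2 (rpow_le_rpow_of_nonpos hs0 hst hp)),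
    abs_of_nonpos (by linarith)]
  nlinarith [mul_le_mul_of_nonneg_left hmono (mul_nonneg (neg_nonneg.2 hp) (sub_nonneg.2 hst))]

theorem norm_inv_norm_smul_sub_le {E : Type*} [NormedAddCommGroup E] [NormedSpace ℝ E] {a : E}
    (ha : a ≠ 0) (b : E) :
    ‖‖a‖⁻¹ • a - ‖b‖⁻¹ • b‖ ≤ 2 * ‖a - b‖ / ‖a‖ := by
  have ha0 : 0 < ‖a‖ := norm_pos_iff.2 ha
  have hsplit : ‖a‖⁻¹ • a - ‖b‖⁻¹ • b = ‖a‖⁻¹ • (a - b) + (‖a‖⁻¹ - ‖b‖⁻¹) • b := by module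
  have hradial : ‖(‖a‖⁻¹ - ‖b‖⁻¹) • b‖ ≤ ‖a - b‖ / ‖a‖ := by
    rcases eq_or_ne b 0 with rfl | hb
    · simp [div_nonneg]
    have hb0 : 0 < ‖b‖ := norm_pos_iff.2 hb
    rw [norm_smul, Real.norm_eq_abs, inv_sub_inv ha0.ne' hb0.ne', abs_div, abs_mul,
      abs_of_pos ha0, abs_of_pos hb0, div_mul_eq_mul_div, mul_div_mul_right _ _ hb0.ne']
    gcongr
    exact abs_norm_sub_norm_le b a |>.trans_eq (norm_sub_rev b a)
  calc ‖‖a‖⁻¹ • a - ‖b‖⁻¹ • b‖ ≤ ‖a - b‖ / ‖a‖ + ‖a - b‖ / ‖a‖ := by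
        rw [hsplit]
        refine (norm_add_le _ _).trans (add_le_add ?_ hradial)
        rw [norm_smul, Real.norm_eq_abs, abs_inv, abs_norm, inv_mul_eq_div]
    _ = 2 * ‖a - b‖ / ‖a‖ := by ring

section Homogeneous

variable {E : Type*} [NormedAddCommGroup E] [NormedSpace ℝ E] {p : ℝ} {g : E → ℝ}

def IsHomogeneousOfDegree (p : ℝ) (g : E → ℝ) : Prop :=
  ∀ x : E, x ≠ 0 → g x = g (‖x‖⁻¹ • x) * ‖x‖ ^ p

namespace IsHomogeneousOfDegree

theorem continuousOn_compl_zero (hg : IsHomogeneousOfDegree p g)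
    (hcont : ContinuousOn g (sphere 0 1)) : ContinuousOn g {0}ᶜ := by
  have hnorm : ContinuousOn (fun x : E => ‖x‖) {0}ᶜ := continuous_norm.continuousOn
  have hnorm0 : ∀ x ∈ ({0}ᶜ : Set E), ‖x‖ ≠ 0 := fun x hx => norm_ne_zero_iff.2 hx
  refine ContinuousOn.congr ?_ fun x hx => hg x hx
  refine (hcont.comp ((hnorm.inv₀ hnorm0).smul continuousOn_id) ?_).mul
    (hnorm.rpow_const fun x hx => Or.inl (hnorm0 x hx))
  exact fun x hx => mem_sphere_zero_iff_norm.2 (norm_smul_inv_norm hx)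

theorem measurable [MeasurableSpace E] [BorelSpace E] (hg : IsHomogeneousOfDegree p g)
    (hcont : ContinuousOn g (sphere 0 1)) : Measurable g :=
  measurable_of_continuousOn_compl_singleton 0 (hg.continuousOn_compl_zero hcont)

theorem abs_le (hg : IsHomogeneousOfDegree p g) (hp : p ≤ 0) {K : ℝ}
    (hK : ∀ u ∈ sphere (0 : E) 1, |g u| ≤ K) {R : ℝ} (hR : 0 < R) {x : E} (hx : R ≤ ‖x‖) :
    |g x| ≤ K * R ^ p := by
  have hx0 : x ≠ 0 := norm_pos_iff.1 (hR.trans_le hx)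
  have hu : |g (‖x‖⁻¹ • x)| ≤ K := hK _ (mem_sphere_zero_iff_norm.2 (norm_smul_inv_norm hx0))
  have hK0 : 0 ≤ K := (abs_nonneg _).trans hu
  rw [hg x hx0, abs_mul, abs_of_nonneg (by positivity : (0 : ℝ) ≤ ‖x‖ ^ p)]
  exact mul_le_mul hu (rpow_le_rpow_of_nonpos hR hx hp) (by positivity) hK0

theorem abs_sub_le (hg : IsHomogeneousOfDegree p g) (hp : p ≤ 0) {M : NNReal}
    (hlip : LipschitzOnWith M g (sphere 0 1)) {K : ℝ} (hK : ∀ u ∈ sphere (0 : E) 1, |g u| ≤ K)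
    {R : ℝ} (hR : 0 < R) {a b : E} (ha : R ≤ ‖a‖) (hb : R ≤ ‖b‖) :
    |g a - g b| ≤ (2 * M + K * -p) * R ^ (p - 1) * ‖a - b‖ := by
  have ha0 : a ≠ 0 := norm_pos_iff.1 (hR.trans_le ha)
  have hb0 : b ≠ 0 := norm_pos_iff.1 (hR.trans_le hb)
  have hua : ‖a‖⁻¹ • a ∈ sphere (0 : E) 1 := mem_sphere_zero_iff_norm.2 (norm_smul_inv_norm ha0)
  have hub : ‖b‖⁻¹ • b ∈ sphere (0 : E) 1 := mem_sphere_zero_iff_norm.2 (norm_smul_inv_norm hb0)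
  have hK0 : 0 ≤ K := (abs_nonneg _).trans (hK _ hub)
  have hangular : |g (‖a‖⁻¹ • a) - g (‖b‖⁻¹ • b)| ≤ M * (2 * ‖a - b‖ / R) := by
    rw [← Real.dist_eq]
    refine (hlip.dist_le_mul _ hua _ hub).trans ?_
    rw [dist_eq_norm]
    gcongr
    exact (norm_inv_norm_smul_sub_le ha0 b).trans (by gcongr)
  have hradial : |‖a‖ ^ p - ‖b‖ ^ p| ≤ -p * R ^ (p - 1) * ‖a - b‖ := by
    refine (abs_rpow_sub_rpow_le_of_nonpos_s5 hp hR ha hb).trans ?_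
    have : 0 ≤ -p := neg_nonneg.2 hp
    gcongr
    exact abs_norm_sub_norm_le a b
  have hapow : ‖a‖ ^ p ≤ R ^ p := rpow_le_rpow_of_nonpos hR ha hp
  rw [hg a ha0, hg b hb0]
  calc |g (‖a‖⁻¹ • a) * ‖a‖ ^ p - g (‖b‖⁻¹ • b) * ‖b‖ ^ p|
      = |(g (‖a‖⁻¹ • a) - g (‖b‖⁻¹ • b)) * ‖a‖ ^ p + g (‖b‖⁻¹ • b) * (‖a‖ ^ p - ‖b‖ ^ p)| := by
        ring_nf
    _ ≤ |g (‖a‖⁻¹ • a) - g (‖b‖⁻¹ • b)| * ‖a‖ ^ p + |g (‖b‖⁻¹ • b)| * |‖a‖ ^ p - ‖b‖ ^ p| := by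
        refine (abs_add_le _ _).trans_eq ?_
        rw [abs_mul, abs_mul, abs_of_nonneg (by positivity : (0 : ℝ) ≤ ‖a‖ ^ p)]
    _ ≤ M * (2 * ‖a - b‖ / R) * R ^ p + K * (-p * R ^ (p - 1) * ‖a - b‖) := by
        gcongr
        exact hK _ hub
    _ = (2 * M + K * -p) * R ^ (p - 1) * ‖a - b‖ := by
        rw [rpow_sub_one hR.ne']
        field_simp

end IsHomogeneousOfDegree

end Homogeneous

namespace MeasureTheory

variable {α F : Type*} [MeasurableSpace α] {μ : Measure α} [NormedAddCommGroup F] {f : α → F}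
  {q : ℝ≥0∞}

theorem eLpNorm_one_le_of_measure_support_le_one (hq : 1 ≤ q) (hf : AEStronglyMeasurable f μ)
    (hsupp : μ (Function.support f) ≤ 1) : eLpNorm f 1 μ ≤ eLpNorm f q μ := by
  rw [← eLpNorm_restrict_eq_of_support_subset subset_rfl,
    ← eLpNorm_restrict_eq_of_support_subset (p := q) subset_rfl]
  refine (eLpNorm_le_eLpNorm_mul_rpow_measure_univ hq hf.restrict).trans ?_
  refine mul_le_of_le_one_right' (ENNReal.rpow_le_one (by simpa using hsupp) ?_)
  rw [toReal_one, sub_nonneg]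
  rcases eq_or_ne q ∞ with rfl | hq_top
  · simp
  · exact one_div_le_one_div_of_le one_pos (by simpa using toReal_mono hq_top hq)

theorem MemLp.integrable_of_measure_support_le_one (hf : MemLp f q μ) (hq : 1 ≤ q)
    (hsupp : μ (Function.support f) ≤ 1) : Integrable f μ :=
  memLp_one_iff_integrable.1 ⟨hf.1,
    (eLpNorm_one_le_of_measure_support_le_one hq hf.1 hsupp).trans_lt hf.2⟩

theorem MemLp.integral_norm_le_of_measure_support_le_one (hf : MemLp f q μ) (hq : 1 ≤ q)
    (hsupp : μ (Function.support f) ≤ 1) : ∫ x, ‖f x‖ ∂μ ≤ (eLpNorm f q μ).toReal := by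
  rw [integral_norm_eq_lintegral_enorm hf.1, ← eLpNorm_one_eq_lintegral_enorm]
  exact toReal_mono hf.2.ne (eLpNorm_one_le_of_measure_support_le_one hq hf.1 hsupp)

end MeasureTheory

section Tg

variable {n : ℕ} {g f : EuclideanSpace ℝ (Fin n) → ℝ}

theorem integrable_Tg_integrand (hg : Measurable g) (hf : Integrable f)
    {x : EuclideanSpace ℝ (Fin n)} {K : ℝ} (hK : ∀ y ∈ Function.support f, |g (x - y)| ≤ K) :
    Integrable (fun y => g (x - y) * f y) := by
  have hmeas : AEStronglyMeasurable (fun y => g (x - y) * f y) :=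
    (hg.comp (measurable_const.sub measurable_id)).aestronglyMeasurable.mul hf.1
  refine (hf.norm.const_mul K).mono' hmeas (Filter.Eventually.of_forall fun y => ?_)
  by_cases hy : f y = 0
  · simp [hy]
  · rw [norm_mul, Real.norm_eq_abs]
    exact mul_le_mul_of_nonneg_right (hK y hy) (norm_nonneg _)

theorem abs_Tg_sub_le {x₁ x₂ : EuclideanSpace ℝ (Fin n)}
    (h₁ : Integrable (fun y => g (x₁ - y) * f y)) (h₂ : Integrable (fun y => g (x₂ - y) * f y))
    (hf : Integrable f) {L : ℝ} (hL : ∀ y ∈ Function.support f, |g (x₁ - y) - g (x₂ - y)| ≤ L) :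
    |Tg g f x₁ - Tg g f x₂| ≤ L * ∫ y, ‖f y‖ := by
  rw [Tg, Tg, ← integral_sub h₁ h₂, ← integral_const_mul, ← Real.norm_eq_abs]
  refine norm_integral_le_of_norm_le (hf.norm.const_mul L) (Filter.Eventually.of_forall fun y => ?_)
  by_cases hy : f y = 0
  · simp [hy]
  · rw [← sub_mul, norm_mul, Real.norm_eq_abs]
    exact mul_le_mul_of_nonneg_right (hL y hy) (norm_nonneg _)

theorem abs_Tg_sub_le_of_isHomogeneousOfDegree {p : ℝ} (hg : IsHomogeneousOfDegree p g)
    (hp : p ≤ 0) {M : NNReal} (hlip : LipschitzOnWith M g (sphere 0 1)) {K : ℝ}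
    (hK : ∀ u ∈ sphere (0 : EuclideanSpace ℝ (Fin n)) 1, |g u| ≤ K) (hf : Integrable f)
    {R : ℝ} (hR : 0 < R) {x₁ x₂ : EuclideanSpace ℝ (Fin n)}
    (h₁ : ∀ y ∈ Function.support f, R ≤ ‖x₁ - y‖) (h₂ : ∀ y ∈ Function.support f, R ≤ ‖x₂ - y‖) :
    |Tg g f x₁ - Tg g f x₂| ≤ (2 * M + K * -p) * R ^ (p - 1) * ‖x₁ - x₂‖ * ∫ y, ‖f y‖ := by
  have hint : ∀ x, (∀ y ∈ Function.support f, R ≤ ‖x - y‖) →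
      Integrable (fun y => g (x - y) * f y) := fun x hx =>
    integrable_Tg_integrand (hg.measurable hlip.continuousOn) hf fun y hy =>
      hg.abs_le hp hK hR (hx y hy)
  refine abs_Tg_sub_le (hint x₁ h₁) (hint x₂ h₂) hf fun y hy => ?_
  simpa only [sub_sub_sub_cancel_right] using hg.abs_sub_le hp hlip hK hR (h₁ y hy) (h₂ y hy)

end Tg

/-- Lemma 11, case (i): `T_g f` is Lipschitz on a closed set far from the support of `f`. -/
theorem stmt5 (n : ℕ) (α : ℝ) (hα : 0 < α) (hαn : α < n)
    (g : EuclideanSpace ℝ (Fin n) → ℝ)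
    (hg_hom : ∀ x : EuclideanSpace ℝ (Fin n), x ≠ 0 →
      g x = g (‖x‖⁻¹ • x) * ‖x‖ ^ (α - n))
    (hg_lip : ∃ M : ℝ, ∀ u v : EuclideanSpace ℝ (Fin n),
      ‖u‖ = 1 → ‖v‖ = 1 → |g u - g v| ≤ M * ‖u - v‖) :
    ∃ D > 0, ∀ (f : EuclideanSpace ℝ (Fin n) → ℝ) (F : Set (EuclideanSpace ℝ (Fin n)))
      (R : ℝ), 1 ≤ R →
      MemLp f (ENNReal.ofReal (n / α)) volume →
      HasCompactSupport f →
      volume (Function.support f) ≤ 1 →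
      IsClosed F →
      (∀ x ∈ F, ∀ y ∈ tsupport f, R ≤ dist x y) →
      ∀ x₁ ∈ F, ∀ x₂ ∈ F,
        |Tg g f x₁ - Tg g f x₂|
          ≤ (D / R) * (eLpNorm f (ENNReal.ofReal (n / α)) volume).toReal * ‖x₁ - x₂‖ := by
  have hp : α - n ≤ 0 := by linarith
  obtain ⟨M, hM⟩ := hg_lip
  have hlip : LipschitzOnWith M.toNNReal g (sphere 0 1) :=
    LipschitzOnWith.of_dist_le' fun u hu v hv => by
      rw [Real.dist_eq, dist_eq_norm]
      exact hM u v (mem_sphere_zero_iff_norm.1 hu) (mem_sphere_zero_iff_norm.1 hv)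
  obtain ⟨K, hK0, hK⟩ :=
    ((isCompact_sphere 0 1).image_of_continuousOn hlip.continuousOn).isBounded.exists_pos_norm_le
  set C := 2 * (M.toNNReal : ℝ) + K * -(α - n)
  have hC : 0 ≤ C := by have := neg_nonneg.2 hp; positivity
  refine ⟨C + 1, by positivity, ?_⟩
  intro f F R hR hf _ hsupp _ hdist x₁ hx₁ x₂ hx₂
  have hfar : ∀ x ∈ F, ∀ y ∈ Function.support f, R ≤ ‖x - y‖ := fun x hx y hy =>
    (hdist x hx y (subset_tsupport f hy)).trans_eq (dist_eq_norm x y)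
  have hq : 1 ≤ ENNReal.ofReal (n / α) := by
    rw [← ofReal_one]; exact ofReal_le_ofReal ((one_le_div hα).2 hαn.le)
  have hRpow : R ^ (α - n - 1) ≤ R⁻¹ := by
    rw [← Real.rpow_neg_one]; exact rpow_le_rpow_of_exponent_le hR (by linarith)
  have hL1 := hf.integral_norm_le_of_measure_support_le_one hq hsupp
  calc |Tg g f x₁ - Tg g f x₂| ≤ C * R ^ (α - n - 1) * ‖x₁ - x₂‖ * ∫ y, ‖f y‖ :=
        abs_Tg_sub_le_of_isHomogeneousOfDegree hg_hom hp hlip (fun u hu => hK _ ⟨u, hu, rfl⟩)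
          (hf.integrable_of_measure_support_le_one hq hsupp) (by linarith)
          (hfar x₁ hx₁) (hfar x₂ hx₂)
    _ ≤ C * R⁻¹ * ‖x₁ - x₂‖ * (eLpNorm f (ENNReal.ofReal (n / α)) volume).toReal := by gcongr
    _ ≤ ((C + 1) / R) * (eLpNorm f (ENNReal.ofReal (n / α)) volume).toReal * ‖x₁ - x₂‖ := by
        rw [mul_right_comm _ ‖x₁ - x₂‖, div_eq_mul_inv (C + 1)]
        gcongr
        linarith
end

section
/- Let 0 < α < n and let g : ℝⁿ\{0} → ℝ be homogeneous of degree α−n and bounded on the unit sphere, f ∈ L^{n/α}(ℝⁿ) with |supp f| ≤ κ. Then there exists C = C(n,α,g) such that for all measurable E ⊆ ℝⁿ with |E| < ∞: (∫_E |T_g f|^{n/α})^{α/n} ≤ C·(|E|^{α/n} + κ^{α/n})·‖f‖_{n/α}. -/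
/-!
Split the kernel `|z|^(α-n)` at the radius `R = κ^(1/n)`. The near part has `L¹` norm
`(n/α) |B₁| R^α = (n/α) |B₁| κ^(α/n)`, so by Young's inequality its convolution with `|f|` has
`L^(n/α)` norm at most that times `‖f‖_(n/α)`. The far part is bounded by `R^(α-n)`, and `f` lives
on a set of measure `≤ R^n`, so by Hölder its convolution with `|f|` is pointwise at most
`R^(α-n) (R^n)^(1-α/n) ‖f‖_(n/α) = ‖f‖_(n/α)`; over `E` this contributes `|E|^(α/n) ‖f‖_(n/α)`.
-/

open Real MeasureTheory ENNReal

theorem ENNReal.lintegral_weight_mul_rpow_le {X : Type*} [MeasurableSpace X] {μ : Measure X}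
    {w f : X → ℝ≥0∞} (hw : AEMeasurable w μ) (hf : AEMeasurable f μ) {p : ℝ} (hp : 1 < p) :
    (∫⁻ x, w x * f x ∂μ) ^ p ≤ (∫⁻ x, w x ∂μ) ^ (p - 1) * ∫⁻ x, w x * f x ^ p ∂μ := by
  set q := p.conjExponent
  have hpq : p.HolderConjugate q := .conjExponent hp
  have hsplit : ∀ x, w x * f x = w x ^ (1 / q) * (w x ^ (1 / p) * f x) := fun x => by
    rw [← mul_assoc, ← ENNReal.rpow_add_of_nonneg _ _ hpq.symm.one_div_nonneg hpq.one_div_nonneg,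
      one_div, one_div, add_comm, hpq.inv_add_inv_eq_one, ENNReal.rpow_one]
  have holder := ENNReal.lintegral_mul_le_Lp_mul_Lq μ hpq.symm
    (hw.pow_const (1 / q)) ((hw.pow_const (1 / p)).mul hf)
  simp only [Pi.mul_apply, ← hsplit] at holder
  calc (∫⁻ x, w x * f x ∂μ) ^ p
      ≤ ((∫⁻ x, (w x ^ (1 / q)) ^ q ∂μ) ^ (1 / q) *
          (∫⁻ x, (w x ^ (1 / p) * f x) ^ p ∂μ) ^ (1 / p)) ^ p := by gcongr
    _ = (∫⁻ x, w x ∂μ) ^ (p - 1) * ∫⁻ x, w x * f x ^ p ∂μ := by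
      simp only [ENNReal.mul_rpow_of_nonneg _ _ hpq.nonneg, ← ENNReal.rpow_mul,
        one_div_mul_cancel hpq.ne_zero, one_div_mul_cancel hpq.symm.ne_zero, ENNReal.rpow_one]
      rw [← hpq.div_conj_eq_sub_one, one_div_mul_eq_div]

section Convolution

variable {G : Type*} [MeasurableSpace G]

theorem lconvolution_le_lintegral_mul [Add G] [Neg G] {μ : Measure G} {f k : G → ℝ≥0∞}
    (hf : AEMeasurable f μ) {c : ℝ≥0∞} (hk : ∀ z, k z ≤ c) (x : G) :
    (f ⋆ₗ[μ] k) x ≤ (∫⁻ y, f y ∂μ) * c := by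
  rw [lconvolution_def, ← lintegral_mul_const'' c hf]
  exact lintegral_mono fun y => by gcongr; exact hk _

theorem lconvolution_indicator_add_indicator_compl [AddGroup G] [MeasurableAdd G]
    [MeasurableNeg G] {μ : Measure G} {f k : G → ℝ≥0∞} (hf : AEMeasurable f μ)
    (hk : Measurable k) {s : Set G} (hs : MeasurableSet s) (x : G) :
    (f ⋆ₗ[μ] s.indicator k) x + (f ⋆ₗ[μ] sᶜ.indicator k) x = (f ⋆ₗ[μ] k) x := by
  simp only [lconvolution_def]
  rw [← lintegral_add_left' (f := fun y => f y * s.indicator k (-y + x))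
    (hf.mul ((hk.indicator hs).comp (measurable_neg.add_const x)).aemeasurable)]
  simp only [← mul_add, Set.indicator_self_add_compl_apply]

variable [AddCommGroup G] [MeasurableAdd₂ G] [MeasurableNeg G] {μ : Measure G} [SFinite μ]
  [μ.IsAddLeftInvariant] [μ.IsNegInvariant]

theorem lintegral_lconvolution_rpow_le {f k : G → ℝ≥0∞} (hf : AEMeasurable f μ)
    (hk : AEMeasurable k μ) {p : ℝ} (hp : 1 < p) :
    ∫⁻ x, (f ⋆ₗ[μ] k) x ^ p ∂μ ≤ (∫⁻ z, k z ∂μ) ^ p * ∫⁻ y, f y ^ p ∂μ := by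
  have hkx : ∀ x, ∫⁻ y, k (-y + x) ∂μ = ∫⁻ z, k z ∂μ := fun x => by
    simp_rw [neg_add_eq_sub]; exact lintegral_sub_left_eq_self k x
  have hky : ∀ y, ∫⁻ x, k (-y + x) ∂μ = ∫⁻ z, k z ∂μ := fun y => lintegral_add_left_eq_self k (-y)
  have hpow := ENNReal.rpow_add_of_nonneg (x := ∫⁻ z, k z ∂μ) (p - 1) 1 (sub_nonneg.2 hp.le)
    zero_le_one
  rw [sub_add_cancel, ENNReal.rpow_one] at hpow
  calc ∫⁻ x, (f ⋆ₗ[μ] k) x ^ p ∂μ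
      ≤ ∫⁻ x, (∫⁻ z, k z ∂μ) ^ (p - 1) * ∫⁻ y, k (-y + x) * f y ^ p ∂μ ∂μ := by
        refine lintegral_mono fun x => ?_
        rw [lconvolution_def, ← hkx x]
        simp_rw [mul_comm (f _)]
        exact ENNReal.lintegral_weight_mul_rpow_le (by fun_prop) hf hp
    _ = (∫⁻ z, k z ∂μ) ^ (p - 1) * ∫⁻ y, (∫⁻ x, k (-y + x) ∂μ) * f y ^ p ∂μ := by
        rw [lintegral_const_mul'' _ (by fun_prop), lintegral_lintegral_swap (by fun_prop)]
        congr 1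
        exact lintegral_congr fun y => lintegral_mul_const'' _ (by fun_prop)
    _ = (∫⁻ z, k z ∂μ) ^ p * ∫⁻ y, f y ^ p ∂μ := by
        simp_rw [hky]
        rw [lintegral_const_mul'' _ (by fun_prop), ← mul_assoc, ← hpow]

/-- Young's convolution inequality. -/
theorem eLpNorm_lconvolution_le {f k : G → ℝ≥0∞} (hf : AEMeasurable f μ) (hk : AEMeasurable k μ)
    {p : ℝ≥0∞} (hp : 1 < p) (hp_top : p ≠ ∞) :
    eLpNorm (f ⋆ₗ[μ] k) p μ ≤ eLpNorm k 1 μ * eLpNorm f p μ := by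
  have hp0 : p ≠ 0 := (zero_lt_one.trans hp).ne'
  have hpr : 1 < p.toReal := by
    rw [← ENNReal.toReal_one]; exact ENNReal.toReal_strict_mono hp_top hp
  rw [eLpNorm_one_eq_lintegral_enorm, eLpNorm_eq_lintegral_rpow_enorm_toReal hp0 hp_top,
    eLpNorm_eq_lintegral_rpow_enorm_toReal hp0 hp_top]
  simp only [enorm_eq_self]
  calc (∫⁻ x, (f ⋆ₗ[μ] k) x ^ p.toReal ∂μ) ^ (1 / p.toReal)
      ≤ ((∫⁻ z, k z ∂μ) ^ p.toReal * ∫⁻ y, f y ^ p.toReal ∂μ) ^ (1 / p.toReal) := by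
        gcongr; exact lintegral_lconvolution_rpow_le hf hk hpr
    _ = _ := by
        rw [ENNReal.mul_rpow_of_nonneg _ _ (by positivity), ← ENNReal.rpow_mul,
          mul_one_div_cancel (by positivity), ENNReal.rpow_one]

end Convolution

theorem eLpNorm_le_eLpNorm_mul_rpow_measure_support {X ε : Type*} [MeasurableSpace X]
    {μ : Measure X} [TopologicalSpace ε] [ENormedAddMonoid ε] {f : X → ε} {p q : ℝ≥0∞}
    (hpq : p ≤ q) (hf : AEStronglyMeasurable f μ) :
    eLpNorm f p μ ≤ eLpNorm f q μ * μ (Function.support f) ^ (1 / p.toReal - 1 / q.toReal) := by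
  set S := toMeasurable μ (Function.support f)
  have hS : Function.support f ⊆ S := subset_toMeasurable μ _
  calc eLpNorm f p μ = eLpNorm f p (μ.restrict S) :=
        (eLpNorm_restrict_eq_of_support_subset hS).symm
    _ ≤ eLpNorm f q (μ.restrict S) * μ.restrict S Set.univ ^ (1 / p.toReal - 1 / q.toReal) :=
      eLpNorm_le_eLpNorm_mul_rpow_measure_univ hpq hf.restrict
    _ = eLpNorm f q μ * μ (Function.support f) ^ (1 / p.toReal - 1 / q.toReal) := by
      rw [eLpNorm_restrict_eq_of_support_subset hS, Measure.restrict_apply_univ,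
        measure_toMeasurable]

theorem eLpNorm_ofReal_eq_lintegral_abs_rpow {X : Type*} [MeasurableSpace X] {μ : Measure X}
    (f : X → ℝ) {p : ℝ} (hp : 0 < p) :
    eLpNorm f (ENNReal.ofReal p) μ = (∫⁻ x, ENNReal.ofReal (|f x| ^ p) ∂μ) ^ (1 / p) := by
  rw [eLpNorm_eq_lintegral_rpow_enorm_toReal (by simpa using hp) ENNReal.ofReal_ne_top,
    ENNReal.toReal_ofReal hp.le]
  simp_rw [Real.enorm_eq_ofReal_abs, ENNReal.ofReal_rpow_of_nonneg (abs_nonneg _) hp.le]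

theorem integral_Ioi_pow_smul_indicator_Iio_rpow {d : ℕ} (hd : 1 ≤ d) {α R : ℝ} (hα : 0 < α)
    (hR : 0 ≤ R) :
    ∫ r in Set.Ioi 0, r ^ (d - 1) • (Set.Iio R).indicator (fun r => r ^ (α - d)) r
      = R ^ α / α := by
  have hpow : ∀ r ∈ Set.Ioi (0 : ℝ), r ^ (d - 1) • (Set.Iio R).indicator (fun r => r ^ (α - d)) r
      = (Set.Iio R).indicator (· ^ (α - 1)) r := by
    intro r (hr : 0 < r)
    by_cases hrR : r ∈ Set.Iio R
    · rw [Set.indicator_of_mem hrR, Set.indicator_of_mem hrR, smul_eq_mul, ← Real.rpow_natCast,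
        ← Real.rpow_add hr, Nat.cast_sub hd]
      ring_nf
    · simp [Set.indicator_of_notMem hrR]
  rw [setIntegral_congr_fun measurableSet_Ioi hpow, integral_indicator measurableSet_Iio,
    Measure.restrict_restrict measurableSet_Iio, Set.Iio_inter_Ioi,
    ← integral_Ioc_eq_integral_Ioo, ← intervalIntegral.integral_of_le hR,
    integral_rpow (Or.inl (by linarith)), sub_add_cancel, Real.zero_rpow hα.ne', sub_zero]

section RieszKernel

variable {E : Type*} [NormedAddCommGroup E]

theorem lintegral_ball_enorm_rpow [NormedSpace ℝ E] [FiniteDimensional ℝ E] [MeasurableSpace E]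
    [BorelSpace E] [Nontrivial E] (μ : Measure E) [μ.IsAddHaarMeasure] {α R : ℝ} (hα : 0 < α)
    (hR : 0 ≤ R) :
    ∫⁻ z in Metric.ball 0 R, ‖z‖ₑ ^ (α - Module.finrank ℝ E) ∂μ
      = ENNReal.ofReal (Module.finrank ℝ E / α * μ.real (Metric.ball 0 1) * R ^ α) := by
  set d := Module.finrank ℝ E
  set φ : ℝ → ℝ := (Set.Iio R).indicator fun r => r ^ (α - d)
  have hφ : (fun z : E => φ ‖z‖) = (Metric.ball 0 R).indicator fun z => ‖z‖ ^ (α - d) := by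
    ext z; simp [φ, Set.indicator]
  have hint : Integrable (fun z : E => φ ‖z‖) μ := by
    rw [hφ, integrable_indicator_iff measurableSet_ball]
    refine integrableOn_ball_of_norm_le_rpow (C := 1) (α := d - α) Module.finrank_pos
      (by linarith) (Filter.Eventually.of_forall fun z => ?_)
      (measurable_norm.pow_const _).aestronglyMeasurable
    rw [Real.norm_of_nonneg (by positivity), one_mul, neg_sub]
  have hkernel : ∀ᵐ z ∂μ, (Metric.ball 0 R).indicator (fun z : E => ‖z‖ₑ ^ (α - d)) z
      = ENNReal.ofReal (φ ‖z‖) := by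
    filter_upwards [compl_mem_ae_iff.mpr (measure_singleton (0 : E))] with z hz
    rw [congrFun hφ z]
    by_cases hzR : z ∈ Metric.ball 0 R
    · simp only [Set.indicator_of_mem hzR]
      rw [← ofReal_norm, ENNReal.ofReal_rpow_of_pos (norm_pos_iff.2 (by simpa using hz))]
    · simp [Set.indicator_of_notMem hzR]
  have hnonneg : 0 ≤ᵐ[μ] fun z : E => φ ‖z‖ := .of_forall fun z => by
    change 0 ≤ φ ‖z‖
    rw [congrFun hφ z]; exact Set.indicator_nonneg (fun z _ => by positivity) z
  rw [← lintegral_indicator measurableSet_ball, lintegral_congr_ae hkernel,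
    ← ofReal_integral_eq_lintegral_ofReal hint hnonneg, integral_fun_norm_addHaar, integral_Ioi_pow_smul_indicator_Iio_rpow Module.finrank_pos hα hR,
    nsmul_eq_mul, smul_eq_mul]
  congr 1
  ring

theorem eLpNorm_lconvolution_indicator_ball_le [NormedSpace ℝ E] [FiniteDimensional ℝ E]
    [MeasurableSpace E] [BorelSpace E] [Nontrivial E] {μ : Measure E} [μ.IsAddHaarMeasure]
    {f : E → ℝ} (hf : AEStronglyMeasurable f μ) {α R : ℝ} (hα : 0 < α) (hR : 0 ≤ R)
    {p : ℝ≥0∞} (hp : 1 < p) (hp_top : p ≠ ∞) :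
    eLpNorm ((‖f ·‖ₑ) ⋆ₗ[μ] (Metric.ball 0 R).indicator
        (fun z : E => ‖z‖ₑ ^ (α - Module.finrank ℝ E))) p μ
      ≤ ENNReal.ofReal (Module.finrank ℝ E / α * μ.real (Metric.ball 0 1) * R ^ α)
          * eLpNorm f p μ := by
  refine (eLpNorm_lconvolution_le hf.enorm
    ((by fun_prop : Measurable fun z : E => ‖z‖ₑ ^ (α - Module.finrank ℝ E)).indicator
      measurableSet_ball).aemeasurable hp hp_top).trans_eq ?_
  simp only [eLpNorm_one_eq_lintegral_enorm, enorm_eq_self]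
  rw [lintegral_indicator measurableSet_ball, lintegral_ball_enorm_rpow μ hα hR, eLpNorm_enorm]

theorem lconvolution_indicator_compl_ball_le [MeasurableSpace E] {μ : Measure E} {f : E → ℝ}
    (hf : AEStronglyMeasurable f μ) {α β R : ℝ} (hα : 0 < α) (hαβ : α < β) (hR : 0 ≤ R)
    (hsupp : μ (Function.support f) ≤ ENNReal.ofReal (R ^ β)) (x : E) :
    ((‖f ·‖ₑ) ⋆ₗ[μ] (Metric.ball 0 R)ᶜ.indicator (fun z : E => ‖z‖ₑ ^ (α - β))) x
      ≤ eLpNorm f (ENNReal.ofReal (β / α)) μ := by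
  set r := ENNReal.ofReal R
  have hβ : 0 < β := hα.trans hαβ
  have hkernel : ∀ z, (Metric.ball 0 R)ᶜ.indicator (fun z : E => ‖z‖ₑ ^ (α - β)) z
      ≤ r ^ (α - β) := by
    intro z
    by_cases hz : z ∈ (Metric.ball (0 : E) R)ᶜ
    · rw [Set.indicator_of_mem hz, ← neg_sub, ENNReal.rpow_neg, ENNReal.rpow_neg]
      refine ENNReal.inv_le_inv.2 (ENNReal.rpow_le_rpow ?_ (by linarith))
      rw [← ofReal_norm]
      exact ENNReal.ofReal_le_ofReal (by simpa using hz)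
    · simp [Set.indicator_of_notMem hz]
  have hholder : eLpNorm f 1 μ ≤ eLpNorm f (ENNReal.ofReal (β / α)) μ * r ^ (β - α) := by
    refine (eLpNorm_le_eLpNorm_mul_rpow_measure_support
      (q := ENNReal.ofReal (β / α)) ?_ hf).trans ?_
    · rw [← ENNReal.ofReal_one]; exact ENNReal.ofReal_le_ofReal ((one_le_div hα).2 hαβ.le)
    · gcongr
      rw [ENNReal.toReal_one, ENNReal.toReal_ofReal (by positivity)]
      calc μ (Function.support f) ^ (1 / 1 - 1 / (β / α))
          ≤ ENNReal.ofReal (R ^ β) ^ (1 / 1 - 1 / (β / α)) := by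
            gcongr
            rw [one_div_one, one_div_div, sub_nonneg, div_le_one hβ]; exact hαβ.le
        _ = r ^ (β - α) := by
            rw [← ENNReal.ofReal_rpow_of_nonneg hR hβ.le, ← ENNReal.rpow_mul]
            congr 1
            field_simp
  -- for `R = 0` this reads `0 * ⊤ ≤ 1`
  have hcancel : r ^ (β - α) * r ^ (α - β) ≤ 1 := by
    rcases eq_or_ne r 0 with h0 | h0
    · rw [h0, ENNReal.zero_rpow_of_pos (by linarith), zero_mul]; exact zero_le_one
    · rw [← ENNReal.rpow_add _ _ h0 ENNReal.ofReal_ne_top, sub_add_sub_cancel, sub_self,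
        ENNReal.rpow_zero]
  calc ((‖f ·‖ₑ) ⋆ₗ[μ] (Metric.ball 0 R)ᶜ.indicator (fun z : E => ‖z‖ₑ ^ (α - β))) x
      ≤ eLpNorm f 1 μ * r ^ (α - β) := by
        rw [eLpNorm_one_eq_lintegral_enorm]
        exact lconvolution_le_lintegral_mul hf.enorm hkernel x
    _ ≤ eLpNorm f (ENNReal.ofReal (β / α)) μ * (r ^ (β - α) * r ^ (α - β)) := by
        rw [← mul_assoc]; gcongr
    _ ≤ eLpNorm f (ENNReal.ofReal (β / α)) μ := mul_le_of_le_one_right' hcancel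

/-- Since `‖0‖ₑ ^ s = ⊤` for `s < 0`, the bound also holds at the origin. -/
theorem enorm_le_mul_enorm_rpow_of_homogeneous [NormedSpace ℝ E] {g : E → ℝ} {s M : ℝ}
    (hs : s < 0) (hM : 0 < M) (hg_hom : ∀ x : E, x ≠ 0 → g x = g (‖x‖⁻¹ • x) * ‖x‖ ^ s)
    (hg_bdd : ∀ x : E, ‖x‖ = 1 → |g x| ≤ M) (z : E) :
    ‖g z‖ₑ ≤ ENNReal.ofReal M * ‖z‖ₑ ^ s := by
  rcases eq_or_ne z 0 with rfl | hz
  · simp [ENNReal.zero_rpow_of_neg hs, ENNReal.mul_top (ENNReal.ofReal_pos.2 hM).ne']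
  have hz' : 0 < ‖z‖ := norm_pos_iff.2 hz
  have hunit : ‖‖z‖⁻¹ • z‖ = 1 := by rw [norm_smul, norm_inv, norm_norm, inv_mul_cancel₀ hz'.ne']
  rw [← ofReal_norm z, ENNReal.ofReal_rpow_of_pos hz', ← ENNReal.ofReal_mul hM.le,
    Real.enorm_eq_ofReal_abs, hg_hom z hz, abs_mul,
    abs_of_nonneg (Real.rpow_nonneg (norm_nonneg z) s)]
  exact ENNReal.ofReal_le_ofReal (by gcongr; exact hg_bdd _ hunit)

end RieszKernel

theorem enorm_Tg_le_mul_lconvolution {n : ℕ} {g f : EuclideanSpace ℝ (Fin n) → ℝ}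
    (hf : AEStronglyMeasurable f volume) {k : EuclideanSpace ℝ (Fin n) → ℝ≥0∞}
    (hk : Measurable k) {c : ℝ≥0∞} (hg : ∀ z, ‖g z‖ₑ ≤ c * k z) (x : EuclideanSpace ℝ (Fin n)) :
    ‖Tg g f x‖ₑ ≤ c * ((‖f ·‖ₑ) ⋆ₗ k) x := by
  rw [lconvolution_def, ← lintegral_const_mul'' c (f := fun y => ‖f y‖ₑ * k (-y + x))
    (hf.enorm.mul (hk.comp (measurable_neg.add_const x)).aemeasurable)]
  refine (enorm_integral_le_lintegral_enorm _).trans (lintegral_mono fun y => ?_)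
  rw [enorm_mul, neg_add_eq_sub, mul_left_comm, mul_comm]
  gcongr
  exact hg _

theorem eLpNorm_Tg_restrict_le {n : ℕ} {α : ℝ} (hα : 0 < α) (hαn : α < n)
    {g f : EuclideanSpace ℝ (Fin n) → ℝ} {c : ℝ≥0∞} (hg : ∀ z, ‖g z‖ₑ ≤ c * ‖z‖ₑ ^ (α - n))
    (hf : AEStronglyMeasurable f volume) {R : ℝ} (hR : 0 ≤ R)
    (hsupp : volume (Function.support f) ≤ ENNReal.ofReal (R ^ n))
    (E : Set (EuclideanSpace ℝ (Fin n))) :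
    eLpNorm (Tg g f) (ENNReal.ofReal (n / α)) (volume.restrict E)
      ≤ c * (ENNReal.ofReal (n / α * volume.real (Metric.ball (0 : EuclideanSpace ℝ (Fin n)) 1)
          * R ^ α) + volume E ^ (α / n)) * eLpNorm f (ENNReal.ofReal (n / α)) volume := by
  have hn : (0 : ℝ) < n := hα.trans hαn
  have : NeZero n := ⟨by exact_mod_cast hn.ne'⟩
  set p := ENNReal.ofReal (n / α)
  have hp : 1 < p := by
    rw [← ENNReal.ofReal_one]
    exact (ENNReal.ofReal_lt_ofReal_iff (by positivity)).2 ((one_lt_div hα).2 hαn)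
  set k : EuclideanSpace ℝ (Fin n) → ℝ≥0∞ := fun z => ‖z‖ₑ ^ (α - n)
  set B := Metric.ball (0 : EuclideanSpace ℝ (Fin n)) R
  set F : EuclideanSpace ℝ (Fin n) → ℝ≥0∞ := (‖f ·‖ₑ)
  have hk : Measurable k := by fun_prop
  have hnear : AEStronglyMeasurable (F ⋆ₗ B.indicator k) (volume.restrict E) :=
    (aemeasurable_lconvolution hf.enorm (hk.indicator measurableSet_ball).aemeasurable)
      |>.aestronglyMeasurable.restrict
  have hfar : AEStronglyMeasurable (F ⋆ₗ Bᶜ.indicator k) (volume.restrict E) :=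
    (aemeasurable_lconvolution hf.enorm (hk.indicator measurableSet_ball.compl).aemeasurable)
      |>.aestronglyMeasurable.restrict
  have hsupp' : volume (Function.support f) ≤ ENNReal.ofReal (R ^ (n : ℝ)) := by
    rwa [Real.rpow_natCast]
  calc eLpNorm (Tg g f) p (volume.restrict E)
      ≤ c * eLpNorm (F ⋆ₗ B.indicator k + F ⋆ₗ Bᶜ.indicator k) p (volume.restrict E) :=
        eLpNorm_le_mul_eLpNorm_of_ae_le_mul'' p (hnear.add hfar) <| .of_forall fun x => by
          rw [Pi.add_apply, enorm_eq_self, lconvolution_indicator_add_indicator_compl hf.enorm hk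
            measurableSet_ball]
          exact enorm_Tg_le_mul_lconvolution hf hk hg x
    _ ≤ c * (eLpNorm (F ⋆ₗ B.indicator k) p volume
          + eLpNorm (fun _ => eLpNorm f p volume) p (volume.restrict E)) := by
        gcongr
        refine (eLpNorm_add_le hnear hfar hp.le).trans (add_le_add ?_ ?_)
        · exact eLpNorm_mono_measure _ Measure.restrict_le_self
        · exact eLpNorm_mono_enorm fun x =>
            lconvolution_indicator_compl_ball_le hf hα hαn hR hsupp' x
    _ ≤ c * (ENNReal.ofReal (n / α * volume.real (Metric.ball (0 : EuclideanSpace ℝ (Fin n)) 1)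
          * R ^ α) * eLpNorm f p volume + eLpNorm f p volume * volume E ^ (α / n)) := by
        rw [eLpNorm_const' _ (zero_lt_one.trans hp).ne' ENNReal.ofReal_ne_top, enorm_eq_self,
          Measure.restrict_apply_univ, ENNReal.toReal_ofReal (by positivity), one_div_div]
        gcongr
        simpa using eLpNorm_lconvolution_indicator_ball_le hf hα hR hp ENNReal.ofReal_ne_top
    _ = _ := by ring

/-- Lemma 13 of Fontana–Morpurgo: local `L^{n/α}` bound for `T_g f` when the support
of `f` has measure at most `κ`. -/
theorem stmt8 (n : ℕ) (α : ℝ) (hα : 0 < α) (hαn : α < n)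
    (g : EuclideanSpace ℝ (Fin n) → ℝ)
    (hg_hom : ∀ x : EuclideanSpace ℝ (Fin n), x ≠ 0 →
      g x = g (‖x‖⁻¹ • x) * ‖x‖ ^ (α - n))
    (hg_bdd : ∃ M : ℝ, ∀ x : EuclideanSpace ℝ (Fin n), ‖x‖ = 1 → |g x| ≤ M) :
    ∃ C > 0, ∀ (f : EuclideanSpace ℝ (Fin n) → ℝ) (κ : ℝ)
      (E : Set (EuclideanSpace ℝ (Fin n))), 0 ≤ κ →
      MemLp f (ENNReal.ofReal (n / α)) volume →
      volume (Function.support f) ≤ ENNReal.ofReal κ →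
      MeasurableSet E → volume E < ⊤ →
      (∫⁻ x in E, ENNReal.ofReal (|Tg g f x| ^ (n / α))) ^ (α / n)
        ≤ ENNReal.ofReal
            (C * ((volume E).toReal ^ (α / n) + κ ^ (α / n)) *
              (eLpNorm f (ENNReal.ofReal (n / α)) volume).toReal) := by
  obtain ⟨M, hM⟩ := hg_bdd
  have hn : (0 : ℝ) < n := hα.trans hαn
  set M' := max M 1
  have hker := enorm_le_mul_enorm_rpow_of_homogeneous (sub_neg.2 hαn)
    (zero_lt_one.trans_le (le_max_right M 1)) hg_hom fun x hx => (hM x hx).trans (le_max_left M 1)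
  set a := n / α * volume.real (Metric.ball (0 : EuclideanSpace ℝ (Fin n)) 1)
  refine ⟨M' * (a + 1), by positivity, fun f κ E hκ hf hsupp _ hE => ?_⟩
  set R := κ ^ (1 / n : ℝ)
  have hRn : R ^ n = κ := by
    rw [← Real.rpow_natCast, ← Real.rpow_mul hκ, one_div_mul_cancel hn.ne', Real.rpow_one]
  have hRα : R ^ α = κ ^ (α / n) := by rw [← Real.rpow_mul hκ, one_div_mul_eq_div]
  have key := eLpNorm_Tg_restrict_le hα hαn hker hf.1 (by positivity) (hRn ▸ hsupp) E
  have hV : volume E ^ (α / n) = ENNReal.ofReal ((volume E).toReal ^ (α / n)) := by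
    rw [← ENNReal.ofReal_rpow_of_nonneg ENNReal.toReal_nonneg (by positivity),
      ENNReal.ofReal_toReal hE.ne]
  rw [eLpNorm_ofReal_eq_lintegral_abs_rpow _ (by positivity), one_div_div, hRα, hV,
    ← ENNReal.ofReal_toReal hf.2.ne, ← ENNReal.ofReal_add (by positivity) (by positivity),
    ← ENNReal.ofReal_mul (by positivity), ← ENNReal.ofReal_mul (by positivity)] at key
  refine key.trans (ENNReal.ofReal_le_ofReal ?_)
  have ha : 0 ≤ a := by positivity
  calc M' * (a * κ ^ (α / n) + (volume E).toReal ^ (α / n)) * _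
      ≤ M' * ((a + 1) * ((volume E).toReal ^ (α / n) + κ ^ (α / n))) * _ := by
        gcongr
        nlinarith [Real.rpow_nonneg hκ (α / n), Real.rpow_nonneg (volume E).toReal_nonneg (α / n)]
    _ = _ := by ring
end

section
/- Let Ω ⊆ ℝⁿ be a measurable set with finite measure, n ≥ 2, and suppose the Chang–Yang–Cianchi inequality holds: there is C₁ such that ∫_Ω exp(2^{−1/(n−1)} γ |u − ū|^{n/(n−1)}) dx ≤ C₁ for all u ∈ W^{1,n}(Ω) with ‖∇u‖_n ≤ 1, where ū = |Ω|^{−1}∫_Ω u and γ > 0 is a constant. Then there is C₂ = C₂(C₁, γ, n, |Ω|) such that ∫_Ω exp(2^{−1/(n−1)} γ |u|^{n/(n−1)}) dx ≤ C₂ for all u ∈ W^{1,n}(Ω) with ‖u‖_n^n + ‖∇u‖_n^n ≤ 1. -/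
open Real MeasureTheory ENNReal

/-!
Write `q = n / (n - 1)`, `c = 2 ^ (-1/(n-1)) γ` and `θ = (1 + ‖∇u‖ₙⁿ) / 2`. The function
`θ ^ (-1/n) u` has gradient norm at most `1`, so the hypothesis bounds the integral of
`exp (c |θ ^ (-1/n) (u - ū)| ^ q)` by `C₁`. Hölder gives `|ū| ≤ |Ω| ^ (-1/n) ‖u‖ₙ`, and
`‖u‖ₙⁿ ≤ 1 - ‖∇u‖ₙⁿ = 2 (1 - θ)`, so
`|u| ≤ |u - ū| + |ū| ≤ a θ ^ (1/n) + b (1 - θ) ^ (1/n)` with `a = θ ^ (-1/n) |u - ū|` and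
`b = 2 ^ (1/n) |Ω| ^ (-1/n)`. The two-term Hölder inequality
`a θ ^ (1/n) + b (1 - θ) ^ (1/n) ≤ (a ^ q + b ^ q) ^ (1/q)` then gives `|u| ^ q ≤ a ^ q + b ^ q`
pointwise, and the integral is at most `C₁ exp (c b ^ q)`.
-/

lemma add_mul_rpow_le_of_holderConjugate {p q θ a b : ℝ} (hpq : p.HolderConjugate q)
    (hθ0 : 0 < θ) (hθ1 : θ ≤ 1) (ha : 0 ≤ a) (hb : 0 ≤ b) :
    (a + b * (1 - θ) ^ p⁻¹) ^ q ≤ (θ ^ (-p⁻¹) * a) ^ q + b ^ q := by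
  have hθ1' : 0 ≤ 1 - θ := sub_nonneg.2 hθ1
  have hθa : θ ^ (-p⁻¹) * a * θ ^ p⁻¹ = a := by
    rw [mul_right_comm, ← rpow_add hθ0, neg_add_cancel, Real.rpow_zero, one_mul]
  have hHolder := inner_le_Lp_mul_Lq_of_nonneg Finset.univ hpq.symm
    (f := ![θ ^ (-p⁻¹) * a, b]) (g := ![θ ^ p⁻¹, (1 - θ) ^ p⁻¹])
    (fun i _ => by fin_cases i <;> simp [hb]; positivity)
    (fun i _ => by fin_cases i <;> simp [rpow_nonneg hθ1']; positivity)
  simp only [Fin.sum_univ_two, Matrix.cons_val_zero, Matrix.cons_val_one, hθa, one_div,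
    rpow_inv_rpow hθ0.le hpq.ne_zero, rpow_inv_rpow hθ1' hpq.ne_zero,
    add_sub_cancel, Real.one_rpow, mul_one] at hHolder
  exact (le_rpow_inv_iff_of_pos (by positivity) (by positivity) hpq.symm.pos).1 hHolder

lemma rpow_le_of_le_add_mul {p q θ s d b N : ℝ} (hpq : p.HolderConjugate q) (hθ0 : 0 < θ)
    (hθ1 : θ ≤ 1) (hs : 0 ≤ s) (hd : 0 ≤ d) (hb : 0 ≤ b) (hN : 0 ≤ N)
    (hNθ : N ^ p ≤ 2 * (1 - θ)) (h : s ≤ d + b * N) :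
    s ^ q ≤ (θ ^ (-p⁻¹) * d) ^ q + (2 ^ p⁻¹ * b) ^ q := by
  have hN' : N ≤ 2 ^ p⁻¹ * (1 - θ) ^ p⁻¹ := by
    rw [← mul_rpow zero_le_two (by linarith)]
    exact (le_rpow_inv_iff_of_pos hN (by linarith) hpq.pos).2 hNθ
  have hs' : s ≤ d + 2 ^ p⁻¹ * b * (1 - θ) ^ p⁻¹ :=
    calc s ≤ d + b * N := h
      _ ≤ d + b * (2 ^ p⁻¹ * (1 - θ) ^ p⁻¹) := by gcongr
      _ = d + 2 ^ p⁻¹ * b * (1 - θ) ^ p⁻¹ := by ring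
  calc s ^ q ≤ (d + 2 ^ p⁻¹ * b * (1 - θ) ^ p⁻¹) ^ q := rpow_le_rpow hs hs' hpq.symm.nonneg
    _ ≤ _ := add_mul_rpow_le_of_holderConjugate hpq hθ0 hθ1 hd (by positivity)

lemma rpow_neg_inv_mul_le_one {p θ t : ℝ} (hp : 0 < p) (hθ : 0 < θ) (ht : 0 ≤ t)
    (htθ : t ^ p ≤ θ) : θ ^ (-p⁻¹) * t ≤ 1 :=
  calc θ ^ (-p⁻¹) * t ≤ θ ^ (-p⁻¹) * θ ^ p⁻¹ := by
        gcongr; exact (le_rpow_inv_iff_of_pos ht hθ.le hp).2 htθ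
    _ = 1 := by rw [← rpow_add hθ, neg_add_cancel, Real.rpow_zero]

lemma abs_average_le_eLpNorm {α : Type*} [MeasurableSpace α] {μ : Measure α}
    [IsFiniteMeasure μ] {p : ℝ≥0∞} {f : α → ℝ} (hp : 1 ≤ p) (hf : MemLp f p μ) :
    |⨍ x, f x ∂μ| ≤ μ.real Set.univ ^ (-p.toReal⁻¹) * (eLpNorm f p μ).toReal := by
  rcases eq_or_ne μ 0 with rfl | hμ
  · simp
  have : NeZero μ := ⟨hμ⟩
  have hM : 0 < μ.real Set.univ := measureReal_univ_pos
  have hp' : p.toReal⁻¹ ≤ 1 := by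
    rw [← ENNReal.toReal_inv]
    exact toReal_le_of_le_ofReal zero_le_one (by simpa using ENNReal.inv_le_one.2 hp)
  have hL1 : ‖∫ x, f x ∂μ‖ₑ ≤ eLpNorm f p μ * μ Set.univ ^ (1 - p.toReal⁻¹) :=
    calc ‖∫ x, f x ∂μ‖ₑ ≤ eLpNorm f 1 μ := by
          rw [eLpNorm_one_eq_lintegral_enorm]; exact enorm_integral_le_lintegral_enorm _
      _ ≤ _ := by simpa using eLpNorm_le_eLpNorm_mul_rpow_measure_univ hp hf.1
  have hL1' := ENNReal.toReal_mono (mul_ne_top hf.eLpNorm_ne_top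
    (rpow_ne_top_of_nonneg (sub_nonneg.2 hp') (measure_ne_top μ _))) hL1
  rw [toReal_enorm, ENNReal.toReal_mul, ← ENNReal.toReal_rpow, ← measureReal_def] at hL1'
  rw [average_eq, smul_eq_mul, abs_mul, abs_inv, abs_of_pos hM, ← Real.norm_eq_abs]
  calc (μ.real Set.univ)⁻¹ * ‖∫ x, f x ∂μ‖
      ≤ (μ.real Set.univ)⁻¹ *
          ((eLpNorm f p μ).toReal * μ.real Set.univ ^ (1 - p.toReal⁻¹)) := by
        gcongr
    _ = _ := by
        rw [mul_left_comm, ← Real.rpow_neg_one, ← rpow_add hM, mul_comm,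
          show (-1 : ℝ) + (1 - p.toReal⁻¹) = -p.toReal⁻¹ by ring]

lemma norm_fderiv_const_mul {E : Type*} [NormedAddCommGroup E] [NormedSpace ℝ E] {u : E → ℝ}
    (hu : Differentiable ℝ u) (r : ℝ) :
    (fun x => ‖fderiv ℝ (fun y => r * u y) x‖) = |r| • fun x => ‖fderiv ℝ u x‖ := by
  ext x
  rw [fderiv_const_mul (hu x), norm_smul, Real.norm_eq_abs, Pi.smul_apply, smul_eq_mul]

lemma lintegral_ofReal_exp_le_of_le_add {α : Type*} [MeasurableSpace α] {μ : Measure α}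
    {f g : α → ℝ} {a : ℝ} (h : ∀ x, f x ≤ a + g x) :
    ∫⁻ x, ENNReal.ofReal (exp (f x)) ∂μ ≤
      ENNReal.ofReal (exp a) * ∫⁻ x, ENNReal.ofReal (exp (g x)) ∂μ := by
  rw [← lintegral_const_mul' _ _ ofReal_ne_top]
  refine lintegral_mono fun x => ?_
  rw [← ENNReal.ofReal_mul (exp_nonneg _), ← exp_add]
  exact ENNReal.ofReal_le_ofReal (exp_le_exp.2 (h x))

theorem stmt19_general (n : ℕ) (hn : 2 ≤ n) (Ω : Set (EuclideanSpace ℝ (Fin n)))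
    (hΩfin : volume Ω < ⊤)
    (γ : ℝ) (hγ : 0 < γ) (C₁ : ℝ)
    (hCYC : ∀ u : EuclideanSpace ℝ (Fin n) → ℝ, Differentiable ℝ u →
      MemLp u (n : ℝ≥0∞) (volume.restrict Ω) →
      MemLp (fun x => ‖fderiv ℝ u x‖) (n : ℝ≥0∞) (volume.restrict Ω) →
      (eLpNorm (fun x => ‖fderiv ℝ u x‖) (n : ℝ≥0∞) (volume.restrict Ω)).toReal ≤ 1 →
      ∫⁻ x in Ω,
          ENNReal.ofReal
            (exp ((2 : ℝ) ^ (-(1 / ((n : ℝ) - 1))) * γ *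
              |u x - (volume Ω).toReal⁻¹ * ∫ y in Ω, u y| ^ ((n : ℝ) / ((n : ℝ) - 1))))
        ≤ ENNReal.ofReal C₁) :
    ∃ C₂ : ℝ, ∀ u : EuclideanSpace ℝ (Fin n) → ℝ, Differentiable ℝ u →
      MemLp u (n : ℝ≥0∞) (volume.restrict Ω) →
      MemLp (fun x => ‖fderiv ℝ u x‖) (n : ℝ≥0∞) (volume.restrict Ω) →
      (eLpNorm u (n : ℝ≥0∞) (volume.restrict Ω)).toReal ^ (n : ℝ) +
          (eLpNorm (fun x => ‖fderiv ℝ u x‖) (n : ℝ≥0∞) (volume.restrict Ω)).toReal ^ (n : ℝ)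
        ≤ 1 →
      ∫⁻ x in Ω,
          ENNReal.ofReal
            (exp ((2 : ℝ) ^ (-(1 / ((n : ℝ) - 1))) * γ *
              |u x| ^ ((n : ℝ) / ((n : ℝ) - 1))))
        ≤ ENNReal.ofReal C₂ := by
  have hpq : (n : ℝ).HolderConjugate ((n : ℝ) / ((n : ℝ) - 1)) :=
    .conjExponent (by exact_mod_cast hn)
  have : IsFiniteMeasure (volume.restrict Ω) := isFiniteMeasure_restrict.2 hΩfin.ne
  set q := (n : ℝ) / ((n : ℝ) - 1)
  set c := (2 : ℝ) ^ (-(1 / ((n : ℝ) - 1))) * γ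
  set b := (volume Ω).toReal ^ (-(n : ℝ)⁻¹)
  set K := c * (2 ^ (n : ℝ)⁻¹ * b) ^ q
  refine ⟨C₁ * exp K, fun u hu hLp hgrad hnorm => ?_⟩
  set N := (eLpNorm u (n : ℝ≥0∞) (volume.restrict Ω)).toReal
  set t := (eLpNorm (fun x => ‖fderiv ℝ u x‖) (n : ℝ≥0∞) (volume.restrict Ω)).toReal
  -- Any `θ` with `t ^ n ≤ θ` and `N ^ n ≤ 2 * (1 - θ)` works; the midpoint avoids a case
  -- split at `t = 0`.
  set θ := (1 + t ^ (n : ℝ)) / 2 with hθ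
  set r := θ ^ (-(n : ℝ)⁻¹)
  set ū := (volume Ω).toReal⁻¹ * ∫ y in Ω, u y
  have hN : 0 ≤ N := toReal_nonneg
  have ht : 0 ≤ t := toReal_nonneg
  have ht1 : t ^ (n : ℝ) ≤ 1 := by linarith [rpow_nonneg hN (n : ℝ)]
  have hθ0 : 0 < θ := by positivity
  have hmean : |ū| ≤ b * N := by
    have h := abs_average_le_eLpNorm (by exact_mod_cast hn.trans' one_le_two) hLp
    rwa [average_eq, measureReal_restrict_apply_univ, smul_eq_mul, toReal_natCast,
      measureReal_def] at h
  have hr : 0 < r := by positivity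
  have hosc :
      ∫⁻ x in Ω, ENNReal.ofReal (exp (c * (r * |u x - ū|) ^ q)) ≤ ENNReal.ofReal C₁ := by
    have h := hCYC (fun x => r * u x) (hu.const_mul r) (hLp.const_mul r)
      (by rw [norm_fderiv_const_mul hu]; exact hgrad.const_smul _)
      (by
        rw [norm_fderiv_const_mul hu, eLpNorm_const_smul, toReal_mul, toReal_enorm,
          Real.norm_eq_abs, abs_abs, abs_of_pos hr]
        exact rpow_neg_inv_mul_le_one hpq.pos hθ0 ht (by linarith [hθ]))
    refine le_of_eq_of_le (lintegral_congr fun x => ?_) h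
    rw [integral_const_mul, ← mul_left_comm, ← mul_sub, abs_mul, abs_of_pos hr]
  calc ∫⁻ x in Ω, ENNReal.ofReal (exp (c * |u x| ^ q))
      ≤ ENNReal.ofReal (exp K) *
          ∫⁻ x in Ω, ENNReal.ofReal (exp (c * (r * |u x - ū|) ^ q)) :=
        lintegral_ofReal_exp_le_of_le_add fun x => by
          have h := rpow_le_of_le_add_mul (b := b) hpq hθ0 (by linarith [hθ])
            (abs_nonneg (u x)) (abs_nonneg (u x - ū)) (by positivity) hN (by linarith [hθ])
            (by linarith [abs_sub_abs_le_abs_sub (u x) ū])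
          linarith [mul_le_mul_of_nonneg_left h (by positivity : 0 ≤ c)]
    _ ≤ ENNReal.ofReal (exp K) * ENNReal.ofReal C₁ := by gcongr
    _ = ENNReal.ofReal (C₁ * exp K) := by rw [← ENNReal.ofReal_mul (exp_nonneg _), mul_comm]

/-- Theorem 23 of Fontana–Morpurgo: the Chang–Yang–Cianchi inequality (for mean-zero
normalization) implies a sharp Trudinger inequality on a bounded domain under the full
Sobolev norm condition `‖u‖ₙⁿ + ‖∇u‖ₙⁿ ≤ 1`, without boundary conditions. -/
theorem stmt19 (n : ℕ) (hn : 2 ≤ n) (Ω : Set (EuclideanSpace ℝ (Fin n)))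
    (hΩ : MeasurableSet Ω) (hΩfin : volume Ω < ⊤) (hΩpos : 0 < volume Ω)
    (γ : ℝ) (hγ : 0 < γ) (C₁ : ℝ)
    (hCYC : ∀ u : EuclideanSpace ℝ (Fin n) → ℝ, Differentiable ℝ u →
      MemLp u (n : ℝ≥0∞) (volume.restrict Ω) →
      MemLp (fun x => ‖fderiv ℝ u x‖) (n : ℝ≥0∞) (volume.restrict Ω) →
      (eLpNorm (fun x => ‖fderiv ℝ u x‖) (n : ℝ≥0∞) (volume.restrict Ω)).toReal ≤ 1 →
      ∫⁻ x in Ω,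
          ENNReal.ofReal
            (exp ((2 : ℝ) ^ (-(1 / ((n : ℝ) - 1))) * γ *
              |u x - (volume Ω).toReal⁻¹ * ∫ y in Ω, u y| ^ ((n : ℝ) / ((n : ℝ) - 1))))
        ≤ ENNReal.ofReal C₁) :
    ∃ C₂ : ℝ, ∀ u : EuclideanSpace ℝ (Fin n) → ℝ, Differentiable ℝ u →
      MemLp u (n : ℝ≥0∞) (volume.restrict Ω) →
      MemLp (fun x => ‖fderiv ℝ u x‖) (n : ℝ≥0∞) (volume.restrict Ω) →
      (eLpNorm u (n : ℝ≥0∞) (volume.restrict Ω)).toReal ^ (n : ℝ) +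
          (eLpNorm (fun x => ‖fderiv ℝ u x‖) (n : ℝ≥0∞) (volume.restrict Ω)).toReal ^ (n : ℝ)
        ≤ 1 →
      ∫⁻ x in Ω,
          ENNReal.ofReal
            (exp ((2 : ℝ) ^ (-(1 / ((n : ℝ) - 1))) * γ *
              |u x| ^ ((n : ℝ) / ((n : ℝ) - 1))))
        ≤ ENNReal.ofReal C₂ :=
  stmt19_general n hn Ω hΩfin γ hγ C₁ hCYC
end
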